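/- Assume r < r_z < p, λ > 1, and w > 0. Then the Patil–Singh generating set S = {φ_i : 0 ≤ i ≤ p−r} ∪ {ψ_j : 0 ≤ j ≤ p−r'} ∪ {θ} ∪ {ξ_{i,j} : 1 ≤ i ≤ j ≤ p−1} is not a Gröbner basis of P with respect to the grevlex order with grading wt(x_i) = m_i and x_0 > x_1 > ⋯ > x_n: the binomial f = x_1·x_n^υ − x_0^{μ+1}·x_{r_z+1}·x_p^{q_z} lies in P and LM(f) is divisible by LM(g) for no g ∈ S. -/
import Mathlib


open MvPolynomial

noncomputable section

/-- The `i`-th variable index, clamped into `Fin (n+1)` (it equals `i` whenever `i ≤ n`). -/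
def vr (n i : ℕ) : Fin (n + 1) := ⟨i % (n + 1), Nat.mod_lt i (Nat.succ_pos n)⟩

/-- The weight of an exponent vector under the grading `wt (x i) = m i`. -/
def wtv (n : ℕ) (m : ℕ → ℕ) (a : Fin (n + 1) →₀ ℕ) : ℕ :=
  ∑ i : Fin (n + 1), m i.val * a i

/-- Grevlex with grading `wt (x i) = m i` and `x_0 < x_1 < ⋯ < x_n` :  `x^a > x^b` iff the
weight of `a` is bigger, or the weights agree and the leftmost nonzero entry of `a - b`
is negative. -/
def GrevGt (n : ℕ) (m : ℕ → ℕ) (a b : Fin (n + 1) →₀ ℕ) : Prop :=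
  wtv n m b < wtv n m a ∨
    (wtv n m a = wtv n m b ∧
      ∃ i : Fin (n + 1), a i < b i ∧ ∀ j : Fin (n + 1), j < i → a j = b j)

/-- Grevlex with grading `wt (x i) = m i` and `x_0 > x_1 > ⋯ > x_n` :  `x^a > x^b` iff the
weight of `a` is bigger, or the weights agree and the rightmost nonzero entry of
`(a_1 - b_1, …, a_n - b_n)` is negative. -/
def GrevGtRev (n : ℕ) (m : ℕ → ℕ) (a b : Fin (n + 1) →₀ ℕ) : Prop :=
  wtv n m b < wtv n m a ∨
    (wtv n m a = wtv n m b ∧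
      ∃ i : Fin (n + 1), 1 ≤ i.val ∧ a i < b i ∧ ∀ j : Fin (n + 1), i < j → a j = b j)

variable {K : Type*} [Field K]

/-- `d` is the exponent vector of the leading monomial of `f` w.r.t. the order `gt`. -/
def IsLM (n : ℕ) (gt : (Fin (n + 1) →₀ ℕ) → (Fin (n + 1) →₀ ℕ) → Prop)
    (f : MvPolynomial (Fin (n + 1)) K) (d : Fin (n + 1) →₀ ℕ) : Prop :=
  d ∈ f.support ∧ ∀ e ∈ f.support, e ≠ d → gt d e

/-- `G` is a Gröbner basis of `P` with respect to the monomial order `gt` :  `G ⊆ P`, every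
element of `G` is nonzero, and for every nonzero `f ∈ P` there is a `g ∈ G` whose leading
monomial divides the leading monomial of `f`. -/
def IsGB (n : ℕ) (gt : (Fin (n + 1) →₀ ℕ) → (Fin (n + 1) →₀ ℕ) → Prop)
    (P : Ideal (MvPolynomial (Fin (n + 1)) K))
    (G : Set (MvPolynomial (Fin (n + 1)) K)) : Prop :=
  G ⊆ (P : Set (MvPolynomial (Fin (n + 1)) K)) ∧ (∀ g ∈ G, g ≠ 0) ∧
    ∀ f ∈ P, f ≠ 0 → ∃ g ∈ G, ∃ dg df, IsLM n gt g dg ∧ IsLM n gt f df ∧ dg ≤ df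

section Helpers

lemma vr_val {n i : ℕ} (h : i ≤ n) : (vr n i).val = i := Nat.mod_eq_of_lt (by omega)

lemma vr_eq_iff {n i : ℕ} (h : i ≤ n) (j : Fin (n+1)) : vr n i = j ↔ i = j.val := by
  rw [Fin.ext_iff, vr_val h]

lemma vr_self {n : ℕ} (j : Fin (n+1)) : vr n j.val = j :=
  Fin.ext (Nat.mod_eq_of_lt j.isLt)

lemma wtv_add {n : ℕ} {m : ℕ → ℕ} (a b : Fin (n+1) →₀ ℕ) :
    wtv n m (a + b) = wtv n m a + wtv n m b := by
  simp [wtv, mul_add, Finset.sum_add_distrib]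

lemma wtv_single {n : ℕ} {m : ℕ → ℕ} (j : Fin (n+1)) (k : ℕ) :
    wtv n m (Finsupp.single j k) = m j.val * k := by
  simp [wtv, Finsupp.single_apply, mul_ite, eq_comm (a := j)]

lemma eval2 {n : ℕ} (i1 i2 c1 c2 : ℕ) (j : Fin (n+1)) (h1 : i1 ≤ n) (h2 : i2 ≤ n) :
    (Finsupp.single (vr n i1) c1 + Finsupp.single (vr n i2) c2) j
      = (if i1 = j.val then c1 else 0) + (if i2 = j.val then c2 else 0) := by
  rw [Finsupp.add_apply, Finsupp.single_apply, Finsupp.single_apply]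
  simp only [vr_eq_iff h1, vr_eq_iff h2]

lemma eval3 {n : ℕ} (i1 i2 i3 c1 c2 c3 : ℕ) (j : Fin (n+1)) (h1 : i1 ≤ n) (h2 : i2 ≤ n)
    (h3 : i3 ≤ n) :
    (Finsupp.single (vr n i1) c1 + Finsupp.single (vr n i2) c2 +
        Finsupp.single (vr n i3) c3) j
      = (if i1 = j.val then c1 else 0) + (if i2 = j.val then c2 else 0) +
          (if i3 = j.val then c3 else 0) := by
  rw [Finsupp.add_apply, Finsupp.add_apply, Finsupp.single_apply, Finsupp.single_apply,
    Finsupp.single_apply]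
  simp only [vr_eq_iff h1, vr_eq_iff h2, vr_eq_iff h3]

variable {K : Type*} [Field K]

lemma supp_binom {n : ℕ} (A B : Fin (n+1) →₀ ℕ) (h : A ≠ B) :
    (monomial A (1:K) - monomial B 1).support = {A, B} := by
  ext d
  simp only [mem_support_iff, coeff_sub, coeff_monomial, Finset.mem_insert, Finset.mem_singleton]
  rcases eq_or_ne d A with rfl | hA <;> rcases eq_or_ne d B with rfl | hB <;>
    simp_all [h, h.symm, Ne.symm]

lemma key_lm {n : ℕ} {m : ℕ → ℕ} {A B : Fin (n+1) →₀ ℕ}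
    {g : MvPolynomial (Fin (n+1)) K}
    (hsupp : g.support = {A, B})
    (hwt : wtv n m A = wtv n m B)
    (i0 : Fin (n+1)) (h1 : 1 ≤ i0.val) (hlt : A i0 < B i0)
    (htail : ∀ j, i0 < j → A j = B j) :
    IsLM n (GrevGtRev n m) g A ∧ ∀ d, IsLM n (GrevGtRev n m) g d → d = A := by
  have hAB : A ≠ B := fun h => by simp [h] at hlt
  have hgt : GrevGtRev n m A B := Or.inr ⟨hwt, i0, h1, hlt, htail⟩
  have hngt : ¬ GrevGtRev n m B A := by
    rintro (h | ⟨-, i, -, hi, htl⟩)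
    · omega
    · rcases lt_trichotomy i i0 with h' | rfl | h'
      · have := htl i0 h'; omega
      · omega
      · have := htail i h'; omega
  constructor
  · refine ⟨by simp [hsupp], fun e he hne => ?_⟩
    rw [hsupp] at he
    rcases Finset.mem_insert.1 he with rfl | he
    · exact absurd rfl hne
    · rw [Finset.mem_singleton] at he; subst he; exact hgt
  · rintro d ⟨hd, hmax⟩
    rw [hsupp] at hd
    rcases Finset.mem_insert.1 hd with rfl | hd
    · rfl
    · rw [Finset.mem_singleton] at hd; subst hd
      exact absurd (hmax A (by simp [hsupp]) hAB) hngt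

end Helpers

set_option maxHeartbeats 1000000 in
theorem stmt_14
    -- the almost arithmetic sequence
    (n p : ℕ) (hn : 2 ≤ n) (hp : p = n - 1)
    (m : ℕ → ℕ) (hmpos : ∀ i ≤ n, 0 < m i)
    (dst : ℕ) (hdst : 0 < dst)
    (harith : ∀ i ≤ p, m i = m 0 + i * dst)
    (hgcd : (Finset.range (n + 1)).gcd m = 1)
    -- the numerical semigroups Γ and Γ'
    (Γ Γ' : Set ℕ)
    (hΓ : Γ = {γ | ∃ c : ℕ → ℕ, γ = ∑ i ∈ Finset.range (n + 1), c i * m i})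
    (hΓ' : Γ' = {γ | ∃ c : ℕ → ℕ, γ = ∑ i ∈ Finset.range (p + 1), c i * m i})
    -- Γ is minimally generated by m_0, …, m_n
    (hmin : ∀ i ≤ n, ¬∃ c : ℕ → ℕ, c i = 0 ∧ m i = ∑ j ∈ Finset.range (n + 1), c j * m j)
    -- u = min{t ≥ 0 : g_t − m_0 ∈ Γ}, with u = q·p + r, 1 ≤ r ≤ p, g_u = q·m_p + m_r
    (u q r : ℕ) (hu : u = q * p + r) (hr1 : 1 ≤ r) (hrp : r ≤ p)
    (humem : ∃ γ ∈ Γ, q * m p + m r = γ + m 0)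
    (humin : ∀ t qt rt : ℕ, t < u → t = qt * p + rt → 1 ≤ rt → rt ≤ p →
        ¬∃ γ ∈ Γ, qt * m p + m rt = γ + m 0)
    -- υ = min{b ≥ 1 : b·m_n ∈ Γ'}
    (v : ℕ) (hv1 : 1 ≤ v) (hvmem : v * m n ∈ Γ')
    (hvmin : ∀ b : ℕ, 1 ≤ b → b < v → b * m n ∉ Γ')
    -- the Patil–Singh parameters w, z, λ, μ, ν
    (w z lam mu nu : ℕ) (hwv : w < v) (hzu : z < u) (hlam : 1 ≤ lam) (hnu : 2 ≤ nu)
    -- u − z = q'·p + r' with 1 ≤ r' ≤ p, and z = q_z·p + r_z with q_z ∈ ℤ, 1 ≤ r_z ≤ p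
    (q' r' : ℕ) (huz : u - z = q' * p + r') (hr'1 : 1 ≤ r') (hr'p : r' ≤ p)
    (qz : ℤ) (rz : ℕ) (hz : (z : ℤ) = qz * p + rz) (hrz1 : 1 ≤ rz) (hrzp : rz ≤ p)
    -- the defining equations g_u = λ·m_0 + w·m_n, υ·m_n = μ·m_0 + g_z,
    -- g_{u−z} + (υ−w)·m_n = ν·m_0
    (heq1 : q * m p + m r = lam * m 0 + w * m n)
    (heq2 : (v : ℤ) * m n = mu * m 0 + (qz * m p + m rz))
    (heq3 : (q' * m p + m r') + (v - w) * m n = nu * m 0)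
    -- the assumptions of the remark: r < r_z < p, λ > 1, w > 0
    (hrrz : r < rz) (hrzp' : rz < p) (hlam1 : 1 < lam) (hw0 : 0 < w)
    -- the toric ideal P = ker η, η(x_i) = t^{m_i}
    (P : Ideal (MvPolynomial (Fin (n + 1)) K))
    (hP : P = RingHom.ker
        (MvPolynomial.aeval (fun i : Fin (n + 1) => (Polynomial.X : Polynomial K) ^ m i.val) :
          MvPolynomial (Fin (n + 1)) K →ₐ[K] Polynomial K))
    -- the Patil–Singh generating set
    -- S = {φ_i : 0 ≤ i ≤ p−r} ∪ {ψ_j : 0 ≤ j ≤ p−r'} ∪ {θ} ∪ {ξ_{i,j} : 1 ≤ i ≤ j ≤ p−1}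
    (G : Set (MvPolynomial (Fin (n + 1)) K))
    (hG : G =
      {f | ∃ i ≤ p - r, f =
          X (vr n (r + i)) * X (vr n p) ^ q -
            X (vr n 0) ^ (lam - 1) * X (vr n i) * X (vr n n) ^ w} ∪
      {f | ∃ j : ℕ, j ≤ p - r' ∧ f =
          X (vr n (r' + j)) * X (vr n p) ^ q' * X (vr n n) ^ (v - w) -
            X (vr n 0) ^ (nu - 1) * X (vr n j)} ∪
      {X (vr n n) ^ v - X (vr n 0) ^ mu * X (vr n rz) * X (vr n p) ^ qz.toNat} ∪
      {f | ∃ i j : ℕ, 1 ≤ i ∧ i ≤ j ∧ j ≤ p - 1 ∧ f =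
          (if i + j ≤ p then X (vr n i) * X (vr n j) - X (vr n 0) * X (vr n (i + j))
           else X (vr n i) * X (vr n j) - X (vr n (i + j - p)) * X (vr n p))}) :
    -- S is not a Gröbner basis of P w.r.t. grevlex with x_0 > x_1 > ⋯ > x_n :
    -- the binomial f = x_1·x_n^υ − x_0^{μ+1}·x_{r_z+1}·x_p^{q_z} lies in P and LM(f) is
    -- divisible by the leading monomial of no element of S
    ¬ IsGB n (GrevGtRev n m) P G ∧
      (X (vr n 1) * X (vr n n) ^ v -
          X (vr n 0) ^ (mu + 1) * X (vr n (rz + 1)) * X (vr n p) ^ qz.toNat :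
          MvPolynomial (Fin (n + 1)) K) ∈ P ∧
      ∃ df, IsLM n (GrevGtRev n m)
          (X (vr n 1) * X (vr n n) ^ v -
            X (vr n 0) ^ (mu + 1) * X (vr n (rz + 1)) * X (vr n p) ^ qz.toNat :
            MvPolynomial (Fin (n + 1)) K) df ∧
        ∀ g ∈ G, ∀ dg, IsLM n (GrevGtRev n m) g dg → ¬ dg ≤ df := by
  -- ===== numeric groundwork =====
  have hp2 : 2 ≤ p := by omega
  have hpn : p < n := by omega
  have hm0 : 0 < m 0 := hmpos 0 (by omega)
  have hqz0 : 0 ≤ qz := by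
    rcases le_or_gt 0 qz with h | h
    · exact h
    have h1 : qz * p ≤ -1 * p := by
      apply mul_le_mul_of_nonneg_right (by omega) (by positivity)
    have h2 : (rz:ℤ) < (p:ℤ) := by exact_mod_cast hrzp'
    have h3 : (0:ℤ) ≤ z := Int.ofNat_nonneg z
    linarith
  set Q : ℕ := qz.toNat with hQdef
  have hQcast : (Q:ℤ) = qz := Int.toNat_of_nonneg hqz0
  have hzn : z = Q * p + rz := by
    have := hz; rw [← hQcast] at this; exact_mod_cast this
  have hQq : Q < q := by
    by_contra hcon
    push_neg at hcon
    have h1 : q * p ≤ Q * p := Nat.mul_le_mul_right p hcon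
    linarith [hu ▸ hzu, hzn]
  have he : (q' + Q) * p + (r' + rz) = q * p + r := by
    have h0 : u = (u - z) + z := by omega
    rw [huz, hzn] at h0
    have : u = (q' + Q) * p + (r' + rz) := by rw [h0]; ring
    omega
  have hq'lt : q' + Q < q := by
    by_contra hcon
    push_neg at hcon
    have h1 : q * p ≤ (q' + Q) * p := Nat.mul_le_mul_right p hcon
    linarith
  have hqeq : q = q' + Q + 1 := by
    by_contra hcon
    have h2 : q' + Q + 2 ≤ q := by omega
    have h3 : (q' + Q + 2) * p ≤ q * p := Nat.mul_le_mul_right p h2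
    have h4 : (q' + Q + 2) * p = (q' + Q) * p + 2 * p := by ring
    linarith
  have hS : r' + rz = r + p := by
    have h4 : (q' + Q + 1) * p = (q' + Q) * p + p := by ring
    rw [hqeq] at he
    linarith
  -- cast copies of the defining equations
  have hw_le : w ≤ v := le_of_lt hwv
  have heq3z : (q' : ℤ) * m p + m r' + ((v : ℤ) - w) * m n = nu * m 0 := by
    have := heq3
    zify [hw_le] at this
    linarith
  have heq1z : (q : ℤ) * m p + m r = lam * m 0 + w * m n := by exact_mod_cast heq1
  have hmr'n : m r' + m rz = m r + m p := by
    have e1 := harith r' hr'p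
    have e2 := harith rz (le_of_lt hrzp')
    have e3 := harith r hrp
    have e4 := harith p le_rfl
    have e5 : r' * dst + rz * dst = r * dst + p * dst := by
      rw [← add_mul, hS, add_mul]
    linarith
  have hmr' : (m r' : ℤ) + m rz = m r + m p := by exact_mod_cast hmr'n
  have hnueq : nu = mu + lam := by
    have hqz : (q : ℤ) * m p = (q' : ℤ) * m p + (Q : ℤ) * m p + m p := by
      have : (q : ℤ) = (q' : ℤ) + Q + 1 := by exact_mod_cast hqeq
      rw [this]; ring
    have hvw : ((v : ℤ) - w) * m n = (v : ℤ) * m n - (w : ℤ) * m n := by ring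
    have hz2 : (v : ℤ) * m n = mu * m 0 + (Q : ℤ) * m p + m rz := by
      rw [hQcast]; linarith [heq2]
    have hfin : (nu : ℤ) * m 0 = (mu + lam : ℕ) * m 0 := by
      push_cast
      linarith
    have := mul_right_cancel₀ (show ((m 0 : ℤ)) ≠ 0 by exact_mod_cast hm0.ne') hfin
    exact_mod_cast this
  -- the key ℕ equation from heq2
  have hkey2 : v * m n = mu * m 0 + m rz + Q * m p := by
    have h2 := heq2
    rw [← hQcast] at h2
    have h3 : v * m n = mu * m 0 + (Q * m p + m rz) := by exact_mod_cast h2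
    linarith
  -- ===== monomial conversions =====
  have hM2 : ∀ (a b : Fin (n+1)) (k l : ℕ),
      (X a ^ k * X b ^ l : MvPolynomial (Fin (n+1)) K)
        = monomial (Finsupp.single a k + Finsupp.single b l) 1 := by
    intro a b k l
    rw [X_pow_eq_monomial, X_pow_eq_monomial, monomial_mul, one_mul]
  have hM3 : ∀ (a b c : Fin (n+1)) (k l j : ℕ),
      (X a ^ k * X b ^ l * X c ^ j : MvPolynomial (Fin (n+1)) K)
        = monomial (Finsupp.single a k + Finsupp.single b l + Finsupp.single c j) 1 := by
    intro a b c k l j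
    rw [X_pow_eq_monomial, X_pow_eq_monomial, X_pow_eq_monomial, monomial_mul, monomial_mul,
      one_mul, one_mul]
  have hnoj : ∀ j : Fin (n+1), ¬ (vr n n < j) := by
    intro j hj
    rw [Fin.lt_def, vr_val (le_refl n)] at hj
    have := j.isLt
    omega
  -- ===== the binomial f and its leading monomial =====
  set DF : Fin (n+1) →₀ ℕ :=
    Finsupp.single (vr n 0) (mu+1) + Finsupp.single (vr n (rz+1)) 1 +
      Finsupp.single (vr n p) Q with hDF
  set BF : Fin (n+1) →₀ ℕ :=
    Finsupp.single (vr n 1) 1 + Finsupp.single (vr n n) v with hBF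
  have hfe : (X (vr n 1) * X (vr n n) ^ v -
      X (vr n 0) ^ (mu + 1) * X (vr n (rz + 1)) * X (vr n p) ^ Q :
      MvPolynomial (Fin (n + 1)) K) = monomial BF 1 - monomial DF 1 := by
    rw [hBF, hDF, ← pow_one (X (vr n 1)), ← pow_one (X (vr n (rz+1))), hM2, hM3]
  have Ef : m 1 * 1 + m n * v = m 0 * (mu+1) + m (rz+1) * 1 + m p * Q := by
    have e1 := harith 1 (by omega)
    have e2 := harith rz (le_of_lt hrzp')
    have e3 := harith (rz+1) (by omega)
    have e4 : m 1 + m rz = m 0 + m (rz+1) := by rw [e1, e2, e3]; ring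
    linarith [hkey2]
  have hwtf : wtv n m DF = wtv n m BF := by
    rw [hDF, hBF, wtv_add, wtv_add, wtv_add, wtv_single, wtv_single, wtv_single, wtv_single,
      wtv_single, vr_val (by omega : 0 ≤ n), vr_val (by omega : 1 ≤ n),
      vr_val (by omega : rz+1 ≤ n), vr_val (by omega : p ≤ n), vr_val (le_refl n)]
    linarith [Ef]
  have hltf : DF (vr n n) < BF (vr n n) := by
    rw [hDF, hBF, eval3 _ _ _ _ _ _ _ (by omega) (by omega) (by omega),
      eval2 _ _ _ _ _ (by omega) (le_refl n)]
    simp only [vr_val (le_refl n)]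
    split_ifs <;> first | omega | exact False.elim (by assumption)
  have htailf : ∀ j, vr n n < j → DF j = BF j := fun j hj => absurd hj (hnoj j)
  have hnef : BF ≠ DF := by
    intro hcon
    rw [hcon] at hltf
    omega
  have hsuppf : (X (vr n 1) * X (vr n n) ^ v -
      X (vr n 0) ^ (mu + 1) * X (vr n (rz + 1)) * X (vr n p) ^ Q :
      MvPolynomial (Fin (n + 1)) K).support = {DF, BF} := by
    rw [hfe, supp_binom _ _ hnef, Finset.pair_comm]
  obtain ⟨hLMf, hUf⟩ := key_lm (m := m) hsuppf hwtf (vr n n)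
    (by rw [vr_val (le_refl n)]; omega) hltf htailf
  have hfne : (X (vr n 1) * X (vr n n) ^ v -
      X (vr n 0) ^ (mu + 1) * X (vr n (rz + 1)) * X (vr n p) ^ Q :
      MvPolynomial (Fin (n + 1)) K) ≠ 0 := by
    intro h0
    rw [h0] at hsuppf
    simp only [MvPolynomial.support_zero] at hsuppf
    exact absurd hsuppf.symm (Finset.insert_ne_empty _ _)
  have hfP : (X (vr n 1) * X (vr n n) ^ v -
      X (vr n 0) ^ (mu + 1) * X (vr n (rz + 1)) * X (vr n p) ^ Q :
      MvPolynomial (Fin (n + 1)) K) ∈ P := by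
    rw [hP]
    have : ∀ g : MvPolynomial (Fin (n+1)) K, g ∈ RingHom.ker
        (MvPolynomial.aeval (fun i : Fin (n + 1) => (Polynomial.X : Polynomial K) ^ m i.val) :
          MvPolynomial (Fin (n + 1)) K →ₐ[K] Polynomial K) ↔
        (MvPolynomial.aeval (fun i : Fin (n + 1) => (Polynomial.X : Polynomial K) ^ m i.val)) g
          = 0 := fun g => RingHom.mem_ker
    rw [this]
    simp only [map_sub, map_mul, map_pow, aeval_X]
    rw [vr_val (by omega : 1 ≤ n), vr_val (le_refl n), vr_val (by omega : 0 ≤ n),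
      vr_val (by omega : rz+1 ≤ n), vr_val (by omega : p ≤ n)]
    rw [← pow_mul, ← pow_mul, ← pow_mul, ← pow_add, ← pow_add, ← pow_add]
    rw [sub_eq_zero]
    congr 1
    linarith [Ef]
  -- ===== no leading monomial of G divides DF =====
  have hnd : ∀ g ∈ G, ∀ dg, IsLM n (GrevGtRev n m) g dg → ¬ dg ≤ DF := by
    intro g hgG dg hdg hle
    rw [hG] at hgG
    simp only [Set.mem_union, Set.mem_setOf_eq, Set.mem_singleton_iff] at hgG
    rcases hgG with ((⟨i, hi, rfl⟩ | ⟨j, hj, rfl⟩) | rfl) | ⟨i, j, h1i, hij, hjp, rfl⟩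
    · -- φ case
      have hri : r + i ≤ p := by omega
      have hge : (X (vr n (r + i)) * X (vr n p) ^ q -
          X (vr n 0) ^ (lam - 1) * X (vr n i) * X (vr n n) ^ w : MvPolynomial (Fin (n+1)) K)
          = monomial (Finsupp.single (vr n (r+i)) 1 + Finsupp.single (vr n p) q) 1 -
            monomial (Finsupp.single (vr n 0) (lam-1) + Finsupp.single (vr n i) 1 +
              Finsupp.single (vr n n) w) 1 := by
        rw [← pow_one (X (vr n (r+i))), ← pow_one (X (vr n i)), hM2, hM3]
      have hwt : wtv n m (Finsupp.single (vr n (r+i)) 1 + Finsupp.single (vr n p) q)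
          = wtv n m (Finsupp.single (vr n 0) (lam-1) + Finsupp.single (vr n i) 1 +
              Finsupp.single (vr n n) w) := by
        rw [wtv_add, wtv_add, wtv_add, wtv_single, wtv_single, wtv_single, wtv_single, wtv_single,
          vr_val (by omega : r+i ≤ n), vr_val (by omega : p ≤ n), vr_val (by omega : 0 ≤ n),
          vr_val (by omega : i ≤ n), vr_val (le_refl n)]
        have e1 : (m (r+i) : ℤ) = m 0 + (r + i : ℕ) * dst := by exact_mod_cast harith (r+i) hri
        have e2 : (m i : ℤ) = m 0 + (i : ℕ) * dst := by exact_mod_cast harith i (by omega)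
        have e3 : (m r : ℤ) = m 0 + (r : ℕ) * dst := by exact_mod_cast harith r hrp
        zify [hlam]
        push_cast at e1 e2 e3 ⊢
        linarith [heq1z]
      have hlt : ((Finsupp.single (vr n (r+i)) 1 + Finsupp.single (vr n p) q :
              Fin (n+1) →₀ ℕ)) (vr n n)
          < ((Finsupp.single (vr n 0) (lam-1) + Finsupp.single (vr n i) 1 +
              Finsupp.single (vr n n) w : Fin (n+1) →₀ ℕ)) (vr n n) := by
        rw [eval2 _ _ _ _ _ (by omega) (by omega),
          eval3 _ _ _ _ _ _ _ (by omega) (by omega) (le_refl n)]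
        simp only [vr_val (le_refl n)]
        split_ifs <;> first | omega | exact False.elim (by assumption)
      have hne := Finsupp.ne_iff.mpr ⟨_, ne_of_lt hlt⟩
      have hsupp := hge.symm ▸ supp_binom _ _ hne
      obtain ⟨-, hU⟩ := key_lm (m := m) hsupp
        hwt (vr n n) (by rw [vr_val (le_refl n)]; omega) hlt (fun j hj => absurd hj (hnoj j))
      rw [hU dg hdg, hDF] at hle
      by_cases hc : r + i = rz + 1 ∨ r + i = p
      · have h := Finsupp.le_def.mp hle (vr n p)
        rw [eval2 _ _ _ _ _ (by omega) (by omega),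
          eval3 _ _ _ _ _ _ _ (by omega) (by omega) (by omega)] at h
        simp only [vr_val (by omega : p ≤ n)] at h
        rcases hc with hc | hc <;> split_ifs at h <;> first | omega | exact False.elim (by assumption)
      · push_neg at hc
        have h := Finsupp.le_def.mp hle (vr n (r+i))
        rw [eval2 _ _ _ _ _ (by omega) (by omega),
          eval3 _ _ _ _ _ _ _ (by omega) (by omega) (by omega)] at h
        simp only [vr_val (by omega : r+i ≤ n)] at h
        split_ifs at h <;> first | omega | exact False.elim (by assumption)
    · -- ψ case
      have hrj : r' + j ≤ p := by omega
      have hge : (X (vr n (r' + j)) * X (vr n p) ^ q' * X (vr n n) ^ (v - w) -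
          X (vr n 0) ^ (nu - 1) * X (vr n j) : MvPolynomial (Fin (n+1)) K)
          = monomial (Finsupp.single (vr n (r'+j)) 1 + Finsupp.single (vr n p) q' +
              Finsupp.single (vr n n) (v-w)) 1 -
            monomial (Finsupp.single (vr n 0) (nu-1) + Finsupp.single (vr n j) 1) 1 := by
        rw [← pow_one (X (vr n (r'+j))), ← pow_one (X (vr n j)), hM3, hM2]
      have hwt : wtv n m (Finsupp.single (vr n 0) (nu-1) + Finsupp.single (vr n j) 1)
          = wtv n m (Finsupp.single (vr n (r'+j)) 1 + Finsupp.single (vr n p) q' +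
              Finsupp.single (vr n n) (v-w)) := by
        rw [wtv_add, wtv_add, wtv_add, wtv_single, wtv_single, wtv_single, wtv_single, wtv_single,
          vr_val (by omega : 0 ≤ n), vr_val (by omega : j ≤ n), vr_val (by omega : r'+j ≤ n),
          vr_val (by omega : p ≤ n), vr_val (le_refl n)]
        have e1 : (m (r'+j) : ℤ) = m 0 + (r' + j : ℕ) * dst := by exact_mod_cast harith (r'+j) hrj
        have e2 : (m j : ℤ) = m 0 + (j : ℕ) * dst := by exact_mod_cast harith j (by omega)
        have e3 : (m r' : ℤ) = m 0 + (r' : ℕ) * dst := by exact_mod_cast harith r' hr'p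
        zify [show 1 ≤ nu by omega, hw_le]
        push_cast at e1 e2 e3 ⊢
        linarith [heq3z]
      have hlt : ((Finsupp.single (vr n 0) (nu-1) + Finsupp.single (vr n j) 1 :
              Fin (n+1) →₀ ℕ)) (vr n n)
          < ((Finsupp.single (vr n (r'+j)) 1 + Finsupp.single (vr n p) q' +
              Finsupp.single (vr n n) (v-w) : Fin (n+1) →₀ ℕ)) (vr n n) := by
        rw [eval2 _ _ _ _ _ (by omega) (by omega),
          eval3 _ _ _ _ _ _ _ (by omega) (by omega) (le_refl n)]
        simp only [vr_val (le_refl n)]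
        split_ifs <;> first | omega | exact False.elim (by assumption)
      have hne := Finsupp.ne_iff.mpr ⟨_, ne_of_lt hlt⟩
      have hsupp := (hge.symm ▸ supp_binom _ _ (Ne.symm hne)).trans (Finset.pair_comm _ _)
      obtain ⟨-, hU⟩ := key_lm (m := m) hsupp
        hwt (vr n n) (by rw [vr_val (le_refl n)]; omega) hlt (fun j hj => absurd hj (hnoj j))
      rw [hU dg hdg, hDF] at hle
      by_cases hj0 : j = 0
      · have h := Finsupp.le_def.mp hle (vr n 0)
        rw [eval2 _ _ _ _ _ (by omega) (by omega),
          eval3 _ _ _ _ _ _ _ (by omega) (by omega) (by omega)] at h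
        simp only [vr_val (by omega : 0 ≤ n)] at h
        split_ifs at h <;> first | omega | exact False.elim (by assumption)
      · have h := Finsupp.le_def.mp hle (vr n j)
        rw [eval2 _ _ _ _ _ (by omega) (by omega),
          eval3 _ _ _ _ _ _ _ (by omega) (by omega) (by omega)] at h
        simp only [vr_val (by omega : j ≤ n)] at h
        split_ifs at h <;> first | omega | exact False.elim (by assumption)
    · -- θ case
      have hge : (X (vr n n) ^ v - X (vr n 0) ^ mu * X (vr n rz) * X (vr n p) ^ Q :
          MvPolynomial (Fin (n+1)) K)
          = monomial (Finsupp.single (vr n n) v) 1 -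
            monomial (Finsupp.single (vr n 0) mu + Finsupp.single (vr n rz) 1 +
              Finsupp.single (vr n p) Q) 1 := by
        rw [← pow_one (X (vr n rz)), hM3, X_pow_eq_monomial]
      have hwt : wtv n m (Finsupp.single (vr n 0) mu + Finsupp.single (vr n rz) 1 +
              Finsupp.single (vr n p) Q)
          = wtv n m (Finsupp.single (vr n n) v) := by
        rw [wtv_add, wtv_add, wtv_single, wtv_single, wtv_single, wtv_single,
          vr_val (by omega : 0 ≤ n), vr_val (by omega : rz ≤ n), vr_val (by omega : p ≤ n),
          vr_val (le_refl n)]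
        linarith [hkey2]
      have hlt : ((Finsupp.single (vr n 0) mu + Finsupp.single (vr n rz) 1 +
              Finsupp.single (vr n p) Q : Fin (n+1) →₀ ℕ)) (vr n n)
          < (Finsupp.single (vr n n) v : Fin (n+1) →₀ ℕ) (vr n n) := by
        rw [eval3 _ _ _ _ _ _ _ (by omega) (by omega) (by omega), Finsupp.single_eq_same]
        simp only [vr_val (le_refl n)]
        split_ifs <;> first | omega | exact False.elim (by assumption)
      have hne := Finsupp.ne_iff.mpr ⟨_, ne_of_lt hlt⟩
      have hsupp := (hge.symm ▸ supp_binom _ _ (Ne.symm hne)).trans (Finset.pair_comm _ _)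
      obtain ⟨-, hU⟩ := key_lm (m := m) hsupp
        hwt (vr n n) (by rw [vr_val (le_refl n)]; omega) hlt (fun j hj => absurd hj (hnoj j))
      rw [hU dg hdg, hDF] at hle
      have h := Finsupp.le_def.mp hle (vr n rz)
      rw [eval3 _ _ _ _ _ _ _ (by omega) (by omega) (by omega),
        eval3 _ _ _ _ _ _ _ (by omega) (by omega) (by omega)] at h
      simp only [vr_val (by omega : rz ≤ n)] at h
      split_ifs at h <;> first | omega | exact False.elim (by assumption)
    · -- ξ case
      by_cases hcs : i + j ≤ p
      · rw [if_pos hcs] at hdg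
        have hge : (X (vr n i) * X (vr n j) - X (vr n 0) * X (vr n (i+j)) :
            MvPolynomial (Fin (n+1)) K)
            = monomial (Finsupp.single (vr n i) 1 + Finsupp.single (vr n j) 1) 1 -
              monomial (Finsupp.single (vr n 0) 1 + Finsupp.single (vr n (i+j)) 1) 1 := by
          rw [← pow_one (X (vr n i)), ← pow_one (X (vr n j)), ← pow_one (X (vr n 0)),
            ← pow_one (X (vr n (i+j))), hM2, hM2]
        have hwt : wtv n m (Finsupp.single (vr n i) 1 + Finsupp.single (vr n j) 1)
            = wtv n m (Finsupp.single (vr n 0) 1 + Finsupp.single (vr n (i+j)) 1) := by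
          rw [wtv_add, wtv_add, wtv_single, wtv_single, wtv_single, wtv_single,
            vr_val (by omega : i ≤ n), vr_val (by omega : j ≤ n), vr_val (by omega : 0 ≤ n),
            vr_val (by omega : i+j ≤ n)]
          rw [harith i (by omega), harith j (by omega), harith (i+j) hcs]
          ring
        have hlt : ((Finsupp.single (vr n i) 1 + Finsupp.single (vr n j) 1 :
                Fin (n+1) →₀ ℕ)) (vr n (i+j))
            < ((Finsupp.single (vr n 0) 1 + Finsupp.single (vr n (i+j)) 1 :
                Fin (n+1) →₀ ℕ)) (vr n (i+j)) := by
          rw [eval2 _ _ _ _ _ (by omega) (by omega), eval2 _ _ _ _ _ (by omega) (by omega)]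
          simp only [vr_val (by omega : i+j ≤ n)]
          split_ifs <;> first | omega | exact False.elim (by assumption)
        have htail : ∀ jj, vr n (i+j) < jj →
            ((Finsupp.single (vr n i) 1 + Finsupp.single (vr n j) 1 : Fin (n+1) →₀ ℕ)) jj
              = ((Finsupp.single (vr n 0) 1 + Finsupp.single (vr n (i+j)) 1 :
                  Fin (n+1) →₀ ℕ)) jj := by
          intro jj hjj
          rw [Fin.lt_def, vr_val (by omega : i+j ≤ n)] at hjj
          rw [eval2 _ _ _ _ _ (by omega) (by omega), eval2 _ _ _ _ _ (by omega) (by omega)]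
          split_ifs <;> first | omega | exact False.elim (by assumption)
        have hne := Finsupp.ne_iff.mpr ⟨_, ne_of_lt hlt⟩
        have hsupp := hge.symm ▸ supp_binom _ _ hne
        obtain ⟨-, hU⟩ := key_lm (m := m) hsupp
          hwt (vr n (i+j)) (by rw [vr_val (by omega : i+j ≤ n)]; omega) hlt htail
        rw [hU dg hdg, hDF] at hle
        by_cases hrj : j = rz + 1
        · by_cases hij2 : i = j
          · have h := Finsupp.le_def.mp hle (vr n j)
            rw [eval2 _ _ _ _ _ (by omega) (by omega),
              eval3 _ _ _ _ _ _ _ (by omega) (by omega) (by omega)] at h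
            simp only [vr_val (by omega : j ≤ n)] at h
            split_ifs at h <;> first | omega | exact False.elim (by assumption)
          · have h := Finsupp.le_def.mp hle (vr n i)
            rw [eval2 _ _ _ _ _ (by omega) (by omega),
              eval3 _ _ _ _ _ _ _ (by omega) (by omega) (by omega)] at h
            simp only [vr_val (by omega : i ≤ n)] at h
            split_ifs at h <;> first | omega | exact False.elim (by assumption)
        · have h := Finsupp.le_def.mp hle (vr n j)
          rw [eval2 _ _ _ _ _ (by omega) (by omega),
            eval3 _ _ _ _ _ _ _ (by omega) (by omega) (by omega)] at h
          simp only [vr_val (by omega : j ≤ n)] at h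
          split_ifs at h <;> first | omega | exact False.elim (by assumption)
      · rw [if_neg hcs] at hdg
        have hge : (X (vr n i) * X (vr n j) - X (vr n (i+j-p)) * X (vr n p) :
            MvPolynomial (Fin (n+1)) K)
            = monomial (Finsupp.single (vr n i) 1 + Finsupp.single (vr n j) 1) 1 -
              monomial (Finsupp.single (vr n (i+j-p)) 1 + Finsupp.single (vr n p) 1) 1 := by
          rw [← pow_one (X (vr n i)), ← pow_one (X (vr n j)), ← pow_one (X (vr n (i+j-p))),
            ← pow_one (X (vr n p)), hM2, hM2]
        have hwt : wtv n m (Finsupp.single (vr n i) 1 + Finsupp.single (vr n j) 1)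
            = wtv n m (Finsupp.single (vr n (i+j-p)) 1 + Finsupp.single (vr n p) 1) := by
          rw [wtv_add, wtv_add, wtv_single, wtv_single, wtv_single, wtv_single,
            vr_val (by omega : i ≤ n), vr_val (by omega : j ≤ n),
            vr_val (by omega : i+j-p ≤ n), vr_val (by omega : p ≤ n)]
          rw [harith i (by omega), harith j (by omega), harith (i+j-p) (by omega),
            harith p le_rfl]
          zify [show p ≤ i + j by omega]
          ring
        have hlt : ((Finsupp.single (vr n i) 1 + Finsupp.single (vr n j) 1 :
                Fin (n+1) →₀ ℕ)) (vr n p)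
            < ((Finsupp.single (vr n (i+j-p)) 1 + Finsupp.single (vr n p) 1 :
                Fin (n+1) →₀ ℕ)) (vr n p) := by
          rw [eval2 _ _ _ _ _ (by omega) (by omega), eval2 _ _ _ _ _ (by omega) (by omega)]
          simp only [vr_val (by omega : p ≤ n)]
          split_ifs <;> first | omega | exact False.elim (by assumption)
        have htail : ∀ jj, vr n p < jj →
            ((Finsupp.single (vr n i) 1 + Finsupp.single (vr n j) 1 : Fin (n+1) →₀ ℕ)) jj
              = ((Finsupp.single (vr n (i+j-p)) 1 + Finsupp.single (vr n p) 1 :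
                  Fin (n+1) →₀ ℕ)) jj := by
          intro jj hjj
          rw [Fin.lt_def, vr_val (by omega : p ≤ n)] at hjj
          rw [eval2 _ _ _ _ _ (by omega) (by omega), eval2 _ _ _ _ _ (by omega) (by omega)]
          split_ifs <;> first | omega | exact False.elim (by assumption)
        have hne := Finsupp.ne_iff.mpr ⟨_, ne_of_lt hlt⟩
        have hsupp := hge.symm ▸ supp_binom _ _ hne
        obtain ⟨-, hU⟩ := key_lm (m := m) hsupp
          hwt (vr n p) (by rw [vr_val (by omega : p ≤ n)]; omega) hlt htail
        rw [hU dg hdg, hDF] at hle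
        by_cases hrj : j = rz + 1
        · by_cases hij2 : i = j
          · have h := Finsupp.le_def.mp hle (vr n j)
            rw [eval2 _ _ _ _ _ (by omega) (by omega),
              eval3 _ _ _ _ _ _ _ (by omega) (by omega) (by omega)] at h
            simp only [vr_val (by omega : j ≤ n)] at h
            split_ifs at h <;> first | omega | exact False.elim (by assumption)
          · have h := Finsupp.le_def.mp hle (vr n i)
            rw [eval2 _ _ _ _ _ (by omega) (by omega),
              eval3 _ _ _ _ _ _ _ (by omega) (by omega) (by omega)] at h
            simp only [vr_val (by omega : i ≤ n)] at h
            split_ifs at h <;> first | omega | exact False.elim (by assumption)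
        · have h := Finsupp.le_def.mp hle (vr n j)
          rw [eval2 _ _ _ _ _ (by omega) (by omega),
            eval3 _ _ _ _ _ _ _ (by omega) (by omega) (by omega)] at h
          simp only [vr_val (by omega : j ≤ n)] at h
          split_ifs at h <;> first | omega | exact False.elim (by assumption)
  -- ===== conclusion =====
  refine ⟨?_, hfP, DF, hLMf, hnd⟩
  rintro ⟨-, -, h3⟩
  obtain ⟨g, hgG, dg, df', hdgLM, hdfLM, hle⟩ := h3 _ hfP hfne
  rw [hUf df' hdfLM] at hle
  exact hnd g hgG dg hdgLM hle




end
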